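/- Let G be a C^∞ Lie group modelled on I : ModelWithCorners ℝ E H and let S : G → Submodule ℝ E be a multiplicative distribution on G. Then S is invariant under the inversion map: for every g : G, Submodule.map (mfderiv I I (fun x => x⁻¹) g) (S g) = S g⁻¹, i.e. the tangent map of the inversion at g carries S(g) onto S(g⁻¹). -/

import Mathlib

open Manifold

/-!
Differentiating `x * x⁻¹ = 1` with the Leibniz rule `d(fg) = dR_g (df) + dL_f (dg)` gives, for
the inversion `ι`, `dι_g v = -dL_{g⁻¹} (dR_{g⁻¹} v)`. A multiplicative distribution is preserved
by all `dL_a` and `dR_a` (take one of the two tangent vectors to be `0`), so `dι_g` maps `S g`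
into `S g⁻¹`; as `ι` is an involution, the image is all of `S g⁻¹`.
-/

section

variable {𝕜 : Type*} [NontriviallyNormedField 𝕜]
  {E : Type*} [NormedAddCommGroup E] [NormedSpace 𝕜 E] {H : Type*} [TopologicalSpace H]
  {I : ModelWithCorners 𝕜 E H}
  {E' : Type*} [NormedAddCommGroup E'] [NormedSpace 𝕜 E'] {H' : Type*} [TopologicalSpace H']
  {I' : ModelWithCorners 𝕜 E' H'} {M : Type*} [TopologicalSpace M] [ChartedSpace H' M]
  {G : Type*} [TopologicalSpace G] [ChartedSpace H G]

theorem Function.LeftInverse.mfderiv_apply_mfderiv {f : M → G} {f' : G → M}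
    (hff' : Function.LeftInverse f' f) {x : M} (hf' : MDifferentiableAt I I' f' (f x))
    (hf : MDifferentiableAt I' I f x) (v : TangentSpace I' x) :
    mfderiv I I' f' (f x) (mfderiv I' I f x v) = v := by
  rw [← mfderiv_comp_apply x hf' hf, hff'.comp_eq_id, mfderiv_id]
  rfl

section Mul

variable [Mul G] [ContMDiffMul I 1 G]

theorem mfderiv_mul_apply_prod (g h : G) (v w : E) :
    mfderiv (I.prod I) I (fun p : G × G => p.1 * p.2) (g, h)
        ((v, w) : TangentSpace (I.prod I) (g, h)) =
      mfderiv I I (· * h) g v + mfderiv I I (g * ·) h w :=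
  mfderiv_prod_eq_add_apply ((contMDiff_mul I 1).mdifferentiableAt one_ne_zero)

theorem mfderiv_mul_apply {f f' : M → G} {x : M} (hf : MDifferentiableAt I' I f x)
    (hf' : MDifferentiableAt I' I f' x) (v : TangentSpace I' x) :
    mfderiv I' I (fun y => f y * f' y) x v =
      mfderiv I I (· * f' x) (f x) (mfderiv I' I f x v) +
        mfderiv I I (f x * ·) (f' x) (mfderiv I' I f' x v) := by
  have hmul := (contMDiff_mul I 1 (G := G)).mdifferentiableAt (x := (f x, f' x)) one_ne_zero
  change mfderiv I' I ((fun p : G × G => p.1 * p.2) ∘ fun y => (f y, f' y)) x v = _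
  rw [mfderiv_comp_apply x hmul (hf.prodMk hf'), mfderiv_prodMk hf hf']
  exact mfderiv_mul_apply_prod _ _ _ _

end Mul

theorem mfderiv_inv_apply [Group G] [LieGroup I 1 G] (g : G) (v : E) :
    mfderiv I I (·⁻¹) g v = -mfderiv I I (g⁻¹ * ·) 1 (mfderiv I I (· * g⁻¹) g v) := by
  have hinv : MDifferentiableAt I I (·⁻¹ : G → G) g :=
    (contMDiff_inv I 1).mdifferentiableAt one_ne_zero
  have hzero : mfderiv I I (· * g⁻¹) g v + mfderiv I I (g * ·) g⁻¹ (mfderiv I I (·⁻¹) g v) = 0 := by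
    have hconst : (fun y : G => id y * y⁻¹) = fun _ => 1 := funext mul_inv_cancel
    have hleibniz := mfderiv_mul_apply mdifferentiableAt_id hinv v
    rw [hconst, mfderiv_const, mfderiv_id] at hleibniz
    exact hleibniz.symm
  have hL := Function.LeftInverse.mfderiv_apply_mfderiv (I' := I) (f := (g * ·))
    (inv_mul_cancel_left g) mdifferentiableAt_mul_left
    mdifferentiableAt_mul_left (mfderiv I I (·⁻¹) g v)
  rw [← hL, eq_neg_of_add_eq_zero_right hzero, map_neg, mul_inv_cancel]

theorem mfderiv_inv_apply_mfderiv_inv [Group G] [LieGroup I 1 G] (g : G) (w : E) :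
    mfderiv I I (·⁻¹) g (mfderiv I I (·⁻¹) g⁻¹ w) = w := by
  have hinv : MDifferentiable I I (·⁻¹ : G → G) := (contMDiff_inv I 1).mdifferentiable one_ne_zero
  have hinvol := Function.LeftInverse.mfderiv_apply_mfderiv (f := (·⁻¹ : G → G)) (f' := (·⁻¹))
    inv_inv (hinv g⁻¹⁻¹) (hinv g⁻¹) w
  rw [inv_inv g] at hinvol
  exact hinvol

variable (I) in
def IsMultiplicativeDistribution [Mul G] (S : G → Submodule 𝕜 E) : Prop :=
  ∀ (g h : G) (v w : E), v ∈ S g → w ∈ S h →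
    mfderiv (I.prod I) I (fun p : G × G => p.1 * p.2) (g, h)
      ((v, w) : TangentSpace (I.prod I) (g, h)) ∈ S (g * h)

namespace IsMultiplicativeDistribution

variable {S : G → Submodule 𝕜 E}

theorem mfderiv_mul_left_mem [Mul G] [ContMDiffMul I 1 G] (hS : IsMultiplicativeDistribution I S)
    {g h : G} {w : E} (hw : w ∈ S h) : mfderiv I I (g * ·) h w ∈ S (g * h) := by
  convert hS g h 0 w (S g).zero_mem hw using 1
  rw [mfderiv_mul_apply_prod]
  exact (add_eq_right.2 (map_zero _)).symm

theorem mfderiv_mul_right_mem [Mul G] [ContMDiffMul I 1 G] (hS : IsMultiplicativeDistribution I S)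
    {g h : G} {v : E} (hv : v ∈ S g) : mfderiv I I (· * h) g v ∈ S (g * h) := by
  convert hS g h v 0 hv (S h).zero_mem using 1
  rw [mfderiv_mul_apply_prod]
  exact (add_eq_left.2 (map_zero _)).symm

theorem mfderiv_inv_mem [Group G] [LieGroup I 1 G] (hS : IsMultiplicativeDistribution I S)
    {g : G} {v : E} (hv : v ∈ S g) : mfderiv I I (·⁻¹) g v ∈ S g⁻¹ := by
  have hR := hS.mfderiv_mul_right_mem (h := g⁻¹) hv
  rw [mul_inv_cancel] at hR
  have hL := neg_mem (hS.mfderiv_mul_left_mem (g := g⁻¹) hR)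
  rw [mul_one] at hL
  rw [mfderiv_inv_apply]
  exact hL

end IsMultiplicativeDistribution

end

/-- A multiplicative distribution on a Lie group is invariant under inversion: the
tangent map of the inversion at `g` carries `S g` onto `S g⁻¹`. -/
theorem stmt_8 {E : Type*} [NormedAddCommGroup E] [NormedSpace ℝ E]
    {H : Type*} [TopologicalSpace H] (I : ModelWithCorners ℝ E H)
    {G : Type*} [TopologicalSpace G] [ChartedSpace H G] [Group G] [LieGroup I (⊤ : ℕ∞) G]
    (S : G → Submodule ℝ E)
    (hS : ∀ (g h : G) (v w : E), v ∈ S g → w ∈ S h →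
      mfderiv (I.prod I) I (fun p : G × G => p.1 * p.2) (g, h)
        ((v, w) : TangentSpace (I.prod I) (g, h)) ∈ S (g * h)) :
    ∀ g : G, Submodule.map (ContinuousLinearMap.toLinearMap (M := E) (M₂ := E) (mfderiv I I (fun x : G => x⁻¹) g)) (S g) = S g⁻¹ := by
  intro g
  refine le_antisymm (α := Submodule ℝ E) ?_ fun w hw => ⟨mfderiv I I (·⁻¹) g⁻¹ w, ?_, ?_⟩
  · rintro _ ⟨v, hv, rfl⟩
    exact IsMultiplicativeDistribution.mfderiv_inv_mem hS hv
  · have hw' := IsMultiplicativeDistribution.mfderiv_inv_mem hS hw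
    rwa [inv_inv] at hw'
  · exact mfderiv_inv_apply_mfderiv_inv g w
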